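/- Let X = (X₁,X₂) be a discrete Gaussian on ℤ^{g₁} × ℤ^{g₂} with parameters (u,B), B = [[B₁₁,B₁₂],[B₁₂ᵗ,B₂₂]]. If X₁ and X₂ are independent, then every entry of B₁₂ lies in iℤ (i.e., exp(2π n₁ᵗB₁₂n₂) = 1 for all n₁ ∈ ℤ^{g₁}, n₂ ∈ ℤ^{g₂}). -/

import Mathlib

open scoped BigOperators
open Matrix

noncomputable section

variable {ι : Type*} [Fintype ι] [DecidableEq ι]

/-- Cast an integer vector to a complex vector. -/
def zc (n : ι → ℤ) : ι → ℂ := fun i => (n i : ℂ)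

/-- A single term of the Riemann theta series, `e(-(1/2) nᵗBn + nᵗu)` with `e(x) = exp(2πx)`. -/
def thetaTerm (u : ι → ℂ) (B : Matrix ι ι ℂ) (n : ι → ℤ) : ℂ :=
  Complex.exp ((2 * (Real.pi : ℂ)) *
    (-(1/2) * dotProduct (zc n) (B.mulVec (zc n)) + dotProduct (zc n) u))

/-- The Riemann theta function `θ(u,B) = Σ_{n∈ℤ^g} e(-(1/2) nᵗBn + nᵗu)`. -/
def theta (u : ι → ℂ) (B : Matrix ι ι ℂ) : ℂ := ∑' n : ι → ℤ, thetaTerm u B n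

/-- Membership in the Siegel right half-space: symmetric with positive definite real part. -/
def SiegelH (B : Matrix ι ι ℂ) : Prop := B.IsSymm ∧ (B.map Complex.re).PosDef

/-- The (complex) discrete Gaussian mass function. -/
def dg (u : ι → ℂ) (B : Matrix ι ι ℂ) (n : ι → ℤ) : ℂ := thetaTerm u B n / theta u B

/-!
Independence says that the mass function `p = T / θ` (with `T = thetaTerm`) has rank one as a
function of `(n₁, n₂)`, so `T(n₁,n₂) T(0,0) = T(n₁,0) T(0,n₂)`; the constant `θ` cancels.
For a block matrix `T(n₁,n₂) = T(n₁,0) T(0,n₂) e(-n₁ᵗB₁₂n₂)` and `T(0,0) = 1`, which forces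
`e(n₁ᵗB₁₂n₂) = 1`. Unit vectors `n₁, n₂` then give `e(B₁₂ i j) = 1`, i.e. `B₁₂ i j ∈ iℤ`.
-/

@[simp]
lemma zc_zero {κ : Type*} : zc (0 : κ → ℤ) = 0 :=
  funext fun _ => Int.cast_zero

lemma zc_single_one {κ : Type*} [DecidableEq κ] (i : κ) : zc (Pi.single i 1) = Pi.single i 1 := by
  funext k
  by_cases h : k = i <;> simp [zc, h]

lemma zc_sumElim {κ₁ κ₂ : Type*} (n₁ : κ₁ → ℤ) (n₂ : κ₂ → ℤ) :
    zc (Sum.elim n₁ n₂) = Sum.elim (zc n₁) (zc n₂) := by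
  funext x; cases x <;> rfl

@[simp]
lemma thetaTerm_zero {κ : Type*} [Fintype κ] (u : κ → ℂ) (B : Matrix κ κ ℂ) :
    thetaTerm u B 0 = 1 := by
  simp [thetaTerm]

lemma thetaTerm_sumElim_fromBlocks {κ₁ κ₂ : Type*} [Fintype κ₁] [Fintype κ₂]
    (u₁ : κ₁ → ℂ) (u₂ : κ₂ → ℂ) (B₁₁ : Matrix κ₁ κ₁ ℂ) (B₁₂ : Matrix κ₁ κ₂ ℂ)
    (B₂₂ : Matrix κ₂ κ₂ ℂ) (n₁ : κ₁ → ℤ) (n₂ : κ₂ → ℤ) :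
    thetaTerm (Sum.elim u₁ u₂) (fromBlocks B₁₁ B₁₂ B₁₂ᵀ B₂₂) (Sum.elim n₁ n₂) =
      thetaTerm u₁ B₁₁ n₁ * thetaTerm u₂ B₂₂ n₂ *
        Complex.exp (-(2 * (Real.pi : ℂ) * (zc n₁ ⬝ᵥ B₁₂ *ᵥ zc n₂))) := by
  have hcross : zc n₂ ⬝ᵥ B₁₂ᵀ *ᵥ zc n₁ = zc n₁ ⬝ᵥ B₁₂ *ᵥ zc n₂ := by
    rw [dotProduct_mulVec, vecMul_transpose, dotProduct_comm]
  simp only [thetaTerm, ← Complex.exp_add]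
  congr 1
  simp only [zc_sumElim, fromBlocks_mulVec, sumElim_dotProduct_sumElim, Sum.elim_comp_inl,
    Sum.elim_comp_inr, dotProduct_add, hcross]
  ring

lemma mul_eq_mul_swap_of_forall_eq_mul {α β M : Type*} [CommMonoid M] {p : α → β → M}
    {P : α → M} {Q : β → M} (h : ∀ a b, p a b = P a * Q b) (a a' : α) (b b' : β) :
    p a b * p a' b' = p a b' * p a' b := by
  simp only [h]; ac_rfl

lemma thetaTerm_mul_swap_of_indep {κ₁ κ₂ : Type*} [Fintype κ₁] [Fintype κ₂]
    {u : κ₁ ⊕ κ₂ → ℂ} {B : Matrix (κ₁ ⊕ κ₂) (κ₁ ⊕ κ₂) ℂ} (hθ : theta u B ≠ 0)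
    (hindep : ∀ (n₁ : κ₁ → ℤ) (n₂ : κ₂ → ℤ),
      dg u B (Sum.elim n₁ n₂) =
        (∑' m₂ : κ₂ → ℤ, dg u B (Sum.elim n₁ m₂)) * (∑' m₁ : κ₁ → ℤ, dg u B (Sum.elim m₁ n₂)))
    (n₁ n₁' : κ₁ → ℤ) (n₂ n₂' : κ₂ → ℤ) :
    thetaTerm u B (Sum.elim n₁ n₂) * thetaTerm u B (Sum.elim n₁' n₂') =
      thetaTerm u B (Sum.elim n₁ n₂') * thetaTerm u B (Sum.elim n₁' n₂) := by
  have h := mul_eq_mul_swap_of_forall_eq_mul hindep n₁ n₁' n₂ n₂'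
  simp only [dg, div_mul_div_comm] at h
  exact (div_left_inj' (mul_ne_zero hθ hθ)).mp h

lemma exists_int_mul_I_of_exp_two_pi_mul_eq_one {z : ℂ}
    (h : Complex.exp (2 * (Real.pi : ℂ) * z) = 1) : ∃ k : ℤ, z = k * Complex.I := by
  obtain ⟨k, hk⟩ := Complex.exp_eq_one_iff.mp h
  refine ⟨k, mul_left_cancel₀ (by simp [Real.pi_ne_zero] : (2 * (Real.pi : ℂ)) ≠ 0) ?_⟩
  rw [hk]
  ring

theorem dg_indep_offdiag_general {ι₁ ι₂ : Type*} [Fintype ι₁] [DecidableEq ι₁]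
    [Fintype ι₂] [DecidableEq ι₂]
    (u₁ : ι₁ → ℂ) (u₂ : ι₂ → ℂ) (B₁₁ : Matrix ι₁ ι₁ ℂ) (B₁₂ : Matrix ι₁ ι₂ ℂ)
    (B₂₂ : Matrix ι₂ ι₂ ℂ)
    (hθ : theta (Sum.elim u₁ u₂) (Matrix.fromBlocks B₁₁ B₁₂ B₁₂ᵀ B₂₂) ≠ 0)
    (hindep : ∀ (n₁ : ι₁ → ℤ) (n₂ : ι₂ → ℤ),
      dg (Sum.elim u₁ u₂) (Matrix.fromBlocks B₁₁ B₁₂ B₁₂ᵀ B₂₂) (Sum.elim n₁ n₂) =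
        (∑' m₂ : ι₂ → ℤ,
            dg (Sum.elim u₁ u₂) (Matrix.fromBlocks B₁₁ B₁₂ B₁₂ᵀ B₂₂) (Sum.elim n₁ m₂)) *
          (∑' m₁ : ι₁ → ℤ,
            dg (Sum.elim u₁ u₂) (Matrix.fromBlocks B₁₁ B₁₂ B₁₂ᵀ B₂₂) (Sum.elim m₁ n₂))) :
    (∀ i j, ∃ z : ℤ, B₁₂ i j = (z : ℂ) * Complex.I) ∧
    (∀ (n₁ : ι₁ → ℤ) (n₂ : ι₂ → ℤ),
      Complex.exp ((2 * (Real.pi : ℂ)) * dotProduct (zc n₁) (B₁₂.mulVec (zc n₂))) = 1) := by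
  have hcross : ∀ (n₁ : ι₁ → ℤ) (n₂ : ι₂ → ℤ),
      Complex.exp (2 * (Real.pi : ℂ) * (zc n₁ ⬝ᵥ B₁₂ *ᵥ zc n₂)) = 1 := by
    intro n₁ n₂
    have h := thetaTerm_mul_swap_of_indep hθ hindep n₁ 0 n₂ 0
    simp only [thetaTerm_sumElim_fromBlocks, zc_zero, thetaTerm_zero, mulVec_zero,
      dotProduct_zero, zero_dotProduct, mul_zero, neg_zero, Complex.exp_zero, mul_one, one_mul] at h
    have hne : thetaTerm u₁ B₁₁ n₁ * thetaTerm u₂ B₂₂ n₂ ≠ 0 :=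
      mul_ne_zero (Complex.exp_ne_zero _) (Complex.exp_ne_zero _)
    rwa [mul_eq_left₀ hne, Complex.exp_neg, inv_eq_one] at h
  refine ⟨fun i j => exists_int_mul_I_of_exp_two_pi_mul_eq_one ?_, hcross⟩
  simpa [zc_single_one, single_one_dotProduct, mulVec_single_one] using
    hcross (Pi.single i 1) (Pi.single j 1)

/-- If the components of a joint discrete Gaussian with block parameter
`B = [[B₁₁,B₁₂],[B₁₂ᵗ,B₂₂]]` are independent, then every entry of `B₁₂` lies in `iℤ`,
equivalently `e(n₁ᵗB₁₂n₂) = 1` for all integer vectors `n₁, n₂`. -/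
theorem dg_indep_offdiag {ι₁ ι₂ : Type*} [Fintype ι₁] [DecidableEq ι₁]
    [Fintype ι₂] [DecidableEq ι₂]
    (u₁ : ι₁ → ℂ) (u₂ : ι₂ → ℂ) (B₁₁ : Matrix ι₁ ι₁ ℂ) (B₁₂ : Matrix ι₁ ι₂ ℂ)
    (B₂₂ : Matrix ι₂ ι₂ ℂ)
    (hB : SiegelH (Matrix.fromBlocks B₁₁ B₁₂ B₁₂ᵀ B₂₂))
    (hθ : theta (Sum.elim u₁ u₂) (Matrix.fromBlocks B₁₁ B₁₂ B₁₂ᵀ B₂₂) ≠ 0)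
    (hindep : ∀ (n₁ : ι₁ → ℤ) (n₂ : ι₂ → ℤ),
      dg (Sum.elim u₁ u₂) (Matrix.fromBlocks B₁₁ B₁₂ B₁₂ᵀ B₂₂) (Sum.elim n₁ n₂) =
        (∑' m₂ : ι₂ → ℤ,
            dg (Sum.elim u₁ u₂) (Matrix.fromBlocks B₁₁ B₁₂ B₁₂ᵀ B₂₂) (Sum.elim n₁ m₂)) *
          (∑' m₁ : ι₁ → ℤ,
            dg (Sum.elim u₁ u₂) (Matrix.fromBlocks B₁₁ B₁₂ B₁₂ᵀ B₂₂) (Sum.elim m₁ n₂))) :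
    (∀ i j, ∃ z : ℤ, B₁₂ i j = (z : ℂ) * Complex.I) ∧
    (∀ (n₁ : ι₁ → ℤ) (n₂ : ι₂ → ℤ),
      Complex.exp ((2 * (Real.pi : ℂ)) * dotProduct (zc n₁) (B₁₂.mulVec (zc n₂))) = 1) :=
  dg_indep_offdiag_general u₁ u₂ B₁₁ B₁₂ B₂₂ hθ hindep
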